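/- arXiv:1904.10266 — 2 statements merged into one kernel-verified Lean document; each statement's English description precedes it below -/
import Mathlib

section
/- Every implication digraph obtained from a 2-CNF formula with m clauses has exactly 2^m sum-representations. Consequently, |F(n,m)| = 2^{-m}·|D°(2n,m)|, where F(n,m) is the set of 2-CNF formulae with n variables and m clauses and D°(2n,m) is the set of sum-representation digraphs with 2n vertices and m edges. -/
/-- Literals over `n` Boolean variables. -/
abbrev Lit (n : ℕ) := Fin n × Bool

/-- Negation of a literal. -/
def lneg {n : ℕ} (l : Lit n) : Lit n := (l.1, !l.2)

/-- The complementary edge of a directed edge: `x → y ↦ ȳ → x̄`. -/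
def ecomp {n : ℕ} (e : Lit n × Lit n) : Lit n × Lit n := (lneg e.2, lneg e.1)

/-- A sum-representation digraph: no loops, no edges `x → x̄`, and conflict-free
(no two complementary edges). -/
def IsSumRep {n : ℕ} (E : Finset (Lit n × Lit n)) : Prop :=
  (∀ e ∈ E, e.1 ≠ e.2) ∧ (∀ e ∈ E, e.2 ≠ lneg e.1) ∧ (∀ e ∈ E, ecomp e ∉ E)

/-- The implication digraph `G + Ḡ` represented by a sum-representation digraph. -/
def implDigraph {n : ℕ} (E : Finset (Lit n × Lit n)) : Finset (Lit n × Lit n) :=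
  E ∪ E.image ecomp

/-- The two implication edges of a clause `(x ∨ y)`: `x̄ → y` and `ȳ → x`. -/
def clauseEdges {n : ℕ} : Sym2 (Lit n) → Finset (Lit n × Lit n) :=
  Sym2.lift ⟨fun a b => ({(lneg a, b), (lneg b, a)} : Finset (Lit n × Lit n)),
    fun a b => Finset.pair_comm _ _⟩

/-- The implication digraph of a 2-CNF formula (a finite set of clauses). -/
def formulaDigraph {n : ℕ} (F : Finset (Sym2 (Lit n))) : Finset (Lit n × Lit n) :=
  F.biUnion clauseEdges

/-!
Send the edge `x̄ → y` to its clause `(x ∨ y)`. A digraph `E` is a sum-representation of the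
implication digraph of `F` exactly when this map is injective on `E` with image `F`, i.e. when `E`
picks one of the two implication edges of every clause; these two edges differ because a clause
has two distinct variables, so there are `2^m` choices. Grouping the sum-representation digraphs
with `m` edges by the formula they represent gives the second identity.
-/

open Finset

theorem ncard_setOf_injOn_image_eq_prod {α β : Type*} [Fintype α] [DecidableEq α]
    [DecidableEq β] (f : α → β) (F : Finset β) :
    {E : Finset α | Set.InjOn f E ∧ E.image f = F}.ncard = ∏ c ∈ F, #{a | f a = c} := by
  rw [← card_pi, ← Set.ncard_coe_finset]
  symm
  have hfg : ∀ g ∈ F.pi fun c => ({a | f a = c} : Finset α),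
      ∀ c (hc : c ∈ F), f (g c hc) = c := fun g hg c hc => by
    simpa using mem_pi.mp hg c hc
  -- `E` is the range of a choice function `g` picking one point of each fibre over `F`
  refine Set.ncard_congr (fun g _ => F.attach.image fun c => g c.1 c.2) ?_ ?_ ?_
  · intro g hg
    refine ⟨?_, ?_⟩
    · simp only [coe_image, Set.InjOn, Set.mem_image, mem_coe, mem_attach, true_and,
        Subtype.exists]
      rintro _ ⟨c, hc, rfl⟩ _ ⟨d, hd, rfl⟩ h
      obtain rfl : c = d := by rwa [hfg g hg, hfg g hg] at h
      rfl
    · simp [image_image, Function.comp_def, hfg g hg]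
  · intro g₁ g₂ hg₁ hg₂ h
    funext c hc
    have hmem : g₁ c hc ∈ F.attach.image fun d => g₂ d.1 d.2 := by
      rw [← h]; exact mem_image_of_mem _ (mem_attach _ ⟨c, hc⟩)
    obtain ⟨⟨d, hd⟩, -, hdc⟩ := mem_image.mp hmem
    obtain rfl : d = c := by rw [← hfg g₂ hg₂ d hd, hdc, hfg g₁ hg₁]
    exact hdc.symm
  · rintro E ⟨hinj, hE⟩
    have hex : ∀ c ∈ F, ∃ a ∈ E, f a = c := fun c hc => mem_image.mp (hE ▸ hc)
    choose g hgE hgf using hex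
    refine ⟨g, mem_pi.mpr fun c hc => by simpa using hgf c hc, ?_⟩
    ext a
    simp only [mem_image, mem_attach, true_and, Subtype.exists]
    constructor
    · rintro ⟨c, hc, rfl⟩
      exact hgE c hc
    · intro ha
      have hfa : f a ∈ F := hE ▸ mem_image_of_mem f ha
      exact ⟨f a, hfa, hinj (hgE _ hfa) ha (hgf _ hfa)⟩

theorem Set.ncard_eq_sum_ncard_fiberwise {ι M : Type*} [DecidableEq M] {s : Set ι}
    {t : Finset M} {f : ι → M} (H : Set.MapsTo f s t) (hs : s.Finite := by toFinite_tac) :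
    s.ncard = ∑ b ∈ t, {a ∈ s | f a = b}.ncard := by
  classical
  lift s to Finset ι using hs
  rw [Set.ncard_coe_finset, card_eq_sum_card_fiberwise H]
  refine sum_congr rfl fun b _ => ?_
  rw [← Set.ncard_coe_finset, coe_filter]
  rfl

section Clauses

variable {n : ℕ}

def toClause (e : Lit n × Lit n) : Sym2 (Lit n) := s(lneg e.1, e.2)

@[simp] lemma lneg_lneg (l : Lit n) : lneg (lneg l) = l := by
  simp [lneg]

lemma lneg_eq_iff {a b : Lit n} : lneg a = b ↔ a = lneg b := by
  constructor <;> rintro rfl <;> simp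

lemma ecomp_eq_iff {e f : Lit n × Lit n} : ecomp e = f ↔ e = ecomp f := by
  constructor <;> rintro rfl <;> simp [ecomp]

lemma ecomp_eq_self_iff {e : Lit n × Lit n} : ecomp e = e ↔ e.2 = lneg e.1 := by
  obtain ⟨a, b⟩ := e
  simp only [ecomp, Prod.mk.injEq]
  constructor
  · rintro ⟨-, rfl⟩
    rfl
  · rintro rfl
    simp

lemma toClause_ecomp (e : Lit n × Lit n) : toClause (ecomp e) = toClause e := by
  simp only [toClause, ecomp, lneg_lneg]
  exact Sym2.eq_swap

lemma clauseEdges_mk (x y : Lit n) :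
    clauseEdges s(x, y) = {(lneg x, y), (lneg y, x)} := rfl

lemma mem_clauseEdges {c : Sym2 (Lit n)} {e : Lit n × Lit n} :
    e ∈ clauseEdges c ↔ toClause e = c := by
  induction c using Sym2.inductionOn with
  | hf x y =>
    obtain ⟨a, b⟩ := e
    simp only [clauseEdges_mk, mem_insert, mem_singleton, toClause, Sym2.eq_iff,
      Prod.mk.injEq, lneg_eq_iff]

lemma toClause_eq_toClause_iff {e f : Lit n × Lit n} :
    toClause e = toClause f ↔ e = f ∨ e = ecomp f := by
  obtain ⟨a, b⟩ := f
  rw [← mem_clauseEdges, toClause, clauseEdges_mk, lneg_lneg]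
  simp [ecomp]

lemma mem_formulaDigraph {F : Finset (Sym2 (Lit n))} {e : Lit n × Lit n} :
    e ∈ formulaDigraph F ↔ toClause e ∈ F := by
  simp [formulaDigraph, mem_clauseEdges]

lemma toClause_surjective : Function.Surjective (toClause (n := n)) := by
  intro c
  induction c using Sym2.inductionOn with
  | hf x y => exact ⟨(lneg x, y), by simp [toClause]⟩

lemma formulaDigraph_injective : Function.Injective (formulaDigraph (n := n)) := by
  intro F G h
  ext c
  obtain ⟨e, rfl⟩ := toClause_surjective c
  rw [← mem_formulaDigraph, h, mem_formulaDigraph]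

lemma implDigraph_eq_formulaDigraph_image (E : Finset (Lit n × Lit n)) :
    implDigraph E = formulaDigraph (E.image toClause) := by
  ext e
  simp only [implDigraph, mem_union, mem_image, mem_formulaDigraph, toClause_eq_toClause_iff,
    ecomp_eq_iff, and_or_left, exists_or, exists_eq_right]

lemma implDigraph_eq_formulaDigraph_iff {E : Finset (Lit n × Lit n)}
    {F : Finset (Sym2 (Lit n))} : implDigraph E = formulaDigraph F ↔ E.image toClause = F := by
  rw [implDigraph_eq_formulaDigraph_image, formulaDigraph_injective.eq_iff]

lemma not_isDiag_toClause_iff {e : Lit n × Lit n} :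
    ¬((toClause e).map Prod.fst).IsDiag ↔ e.1 ≠ e.2 ∧ e.2 ≠ lneg e.1 := by
  obtain ⟨⟨i, a⟩, ⟨j, b⟩⟩ := e
  simp only [toClause, lneg, Sym2.map_mk, Sym2.mk_isDiag_iff, ne_eq, Prod.mk.injEq]
  cases a <;> cases b <;> simp [eq_comm]

lemma isSumRep_iff_injOn {E : Finset (Lit n × Lit n)} :
    IsSumRep E ↔ Set.InjOn toClause (E : Set (Lit n × Lit n)) ∧
      ∀ e ∈ E, ¬((toClause e).map Prod.fst).IsDiag := by
  simp only [not_isDiag_toClause_iff]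
  constructor
  · rintro ⟨hloop, hneg, hconf⟩
    refine ⟨fun a ha b hb hab => ?_, fun e he => ⟨hloop e he, hneg e he⟩⟩
    rcases toClause_eq_toClause_iff.mp hab with h | rfl
    · exact h
    · exact absurd ha (hconf b hb)
  · rintro ⟨hinj, hgood⟩
    refine ⟨fun e he => (hgood e he).1, fun e he => (hgood e he).2, fun e he hc => ?_⟩
    exact (hgood e he).2 (ecomp_eq_self_iff.mp (hinj hc he (toClause_ecomp e)))

lemma card_filter_toClause_eq {c : Sym2 (Lit n)} (hc : ¬(c.map Prod.fst).IsDiag) :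
    #{e | toClause e = c} = 2 := by
  obtain ⟨e, rfl⟩ := toClause_surjective c
  have hfiber : ({f | toClause f = toClause e} : Finset _) = {e, ecomp e} := by
    ext f
    simp [toClause_eq_toClause_iff]
  have hne : e ≠ ecomp e := Ne.symm (ecomp_eq_self_iff.not.mpr (not_isDiag_toClause_iff.mp hc).2)
  rw [hfiber, card_pair hne]

lemma ncard_setOf_isSumRep_image_eq {F : Finset (Sym2 (Lit n))}
    (hF : ∀ c ∈ F, ¬(c.map Prod.fst).IsDiag) :
    {E : Finset (Lit n × Lit n) | IsSumRep E ∧ E.image toClause = F}.ncard = 2 ^ #F := by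
  have hreps : {E : Finset (Lit n × Lit n) | IsSumRep E ∧ E.image toClause = F}
      = {E : Finset (Lit n × Lit n) | Set.InjOn toClause (E : Set (Lit n × Lit n)) ∧
          E.image toClause = F} := by
    ext E
    simp only [Set.mem_ofPred_eq, isSumRep_iff_injOn]
    constructor
    · exact fun ⟨⟨hinj, _⟩, hE⟩ => ⟨hinj, hE⟩
    · rintro ⟨hinj, rfl⟩
      exact ⟨⟨hinj, fun e he => hF _ (mem_image_of_mem _ he)⟩, rfl⟩
  rw [hreps, ncard_setOf_injOn_image_eq_prod,
    prod_congr rfl fun c hc => card_filter_toClause_eq (hF c hc), prod_const]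

lemma ncard_setOf_isSumRep_card_eq (m : ℕ) :
    {E : Finset (Lit n × Lit n) | IsSumRep E ∧ #E = m}.ncard
      = {F : Finset (Sym2 (Lit n)) | #F = m ∧ ∀ c ∈ F, ¬(c.map Prod.fst).IsDiag}.ncard
        * 2 ^ m := by
  set B := {F : Finset (Sym2 (Lit n)) | #F = m ∧ ∀ c ∈ F, ¬(c.map Prod.fst).IsDiag}
  have hmaps : Set.MapsTo (image toClause) {E | IsSumRep E ∧ #E = m}
      ((Set.toFinite B).toFinset : Set (Finset (Sym2 (Lit n)))) := by
    rintro E ⟨hE, rfl⟩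
    rw [isSumRep_iff_injOn] at hE
    simp only [Set.Finite.coe_toFinset, B, Set.mem_ofPred_eq, card_image_of_injOn hE.1,
      forall_mem_image, true_and]
    exact hE.2
  rw [Set.ncard_eq_sum_ncard_fiberwise hmaps, Set.ncard_eq_toFinset_card B, ← smul_eq_mul,
    ← sum_const]
  refine sum_congr rfl fun F hF => ?_
  obtain ⟨rfl, hgood⟩ := (Set.toFinite B).mem_toFinset.mp hF
  rw [← ncard_setOf_isSumRep_image_eq hgood]
  congr 1
  ext E
  simp only [Set.mem_ofPred_eq]
  constructor
  · exact fun ⟨⟨hE, _⟩, hEF⟩ => ⟨hE, hEF⟩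
  · rintro ⟨hE, rfl⟩
    exact ⟨⟨hE, (card_image_of_injOn (isSumRep_iff_injOn.mp hE).1).symm⟩, rfl⟩

end Clauses

/-- Every implication digraph obtained from a 2-CNF formula with `m` clauses has
exactly `2^m` sum-representations; consequently
`|F(n,m)| · 2^m = |D°(2n,m)|`. -/
theorem sum_representation_count (n m : ℕ) :
    (∀ F : Finset (Sym2 (Lit n)), F.card = m →
        (∀ c ∈ F, ¬ (c.map Prod.fst).IsDiag) →
        ({E : Finset (Lit n × Lit n) |
            IsSumRep E ∧ implDigraph E = formulaDigraph F}).ncard = 2 ^ m)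
    ∧ ({F : Finset (Sym2 (Lit n)) |
          F.card = m ∧ ∀ c ∈ F, ¬ (c.map Prod.fst).IsDiag}).ncard * 2 ^ m
        = ({E : Finset (Lit n × Lit n) | IsSumRep E ∧ E.card = m}).ncard := by
  refine ⟨fun F hm hF => ?_, (ncard_setOf_isSumRep_card_eq m).symm⟩
  simp_rw [implDigraph_eq_formulaDigraph_iff]
  rw [ncard_setOf_isSumRep_image_eq hF, hm]
end

section
/- If a directed graph D on vertex set {x_1,…,x_n,x̄_1,…,x̄_n} is closed under edge complementation (i.e., for every edge x → y the edge ȳ → x̄ is also in D), and every vertex x of D has a directed path to its complement x̄, then the following holds: if C₁ and C₂ are strongly connected components of D and there is a directed path from some vertex of C₁ to some vertex of C₂, then there is also a directed path from C₂ back to C₁; hence C₁ and C₂ lie in a common strongly connected component. In particular, the contradictory component of an implication digraph is a disjoint union of strongly connected components with no directed paths between distinct ones. -/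
/-!
Complementing a path `a ⇝ b` gives a path `b̄ ⇝ ā`. In a contradictory component every
vertex reaches its complement, and `ā` reaches `a` because complementation is an
involution, so `b ⇝ b̄ ⇝ ā ⇝ a`: reachability is symmetric.
-/

namespace Relation

variable {V : Type*} {neg : V → V} {Adj : V → V → Prop}

theorem ReflTransGen.complement (hcomp : ∀ u v, Adj u v → Adj (neg v) (neg u))
    {a b : V} (h : ReflTransGen Adj a b) : ReflTransGen Adj (neg b) (neg a) :=
  h.swap.lift neg fun u v huv => hcomp v u huv

theorem ReflTransGen.symm_of_reaches_complement (hinv : Function.Involutive neg)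
    (hcomp : ∀ u v, Adj u v → Adj (neg v) (neg u))
    (hcontra : ∀ x, ReflTransGen Adj x (neg x)) {a b : V} (h : ReflTransGen Adj a b) :
    ReflTransGen Adj b a := by
  have hnega : ReflTransGen Adj (neg a) a := by
    simpa only [hinv a] using hcontra (neg a)
  exact (hcontra b).trans ((h.complement hcomp).trans hnega)

end Relation

/-- In a digraph on literals that is closed under edge complementation and in which
every vertex has a directed path to its complement, reachability is symmetric: if some
vertex of a strongly connected component `C₁` reaches a vertex of `C₂`, then `C₂`
reaches back to `C₁`; hence the two lie in a common strongly connected component.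
In particular the contradictory component of an implication digraph is a disjoint
union of strongly connected components with no directed paths between distinct ones. -/
theorem contradictory_component_sccs {V : Type*} (neg : V → V)
    (hinv : Function.Involutive neg) (Adj : V → V → Prop)
    (hcomp : ∀ u v, Adj u v → Adj (neg v) (neg u))
    (hcontra : ∀ x, Relation.ReflTransGen Adj x (neg x)) :
    ∀ a b, Relation.ReflTransGen Adj a b →
      Relation.ReflTransGen Adj b a ∧
      (Relation.ReflTransGen Adj a b ∧ Relation.ReflTransGen Adj b a) := by
  intro a b hab
  have hba := hab.symm_of_reaches_complement hinv hcomp hcontra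
  exact ⟨hba, hab, hba⟩
end
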